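/- Let d ≥ 1 and let k, l be real numbers with k < d, l < d and k + l > d. Then there exists C > 0 such that for all x ∈ ℤ^d, Σ_{y∈ℤ^d} ⟨x-y⟩^{-k}⟨y⟩^{-l} ≤ C⟨x⟩^{d-k-l}. -/

import Mathlib

/-- Japanese bracket `⟨x⟩ = (1 + |x|²)^{1/2}` for `x ∈ ℤ^d`. -/
noncomputable def jap {d : ℕ} (x : Fin d → ℤ) : ℝ :=
  (1 + ∑ j, ((x j : ℝ)) ^ 2) ^ ((1 : ℝ) / 2)

/-!
With `N` the sup norm on `ℤ^d`, the weight `⟨y⟩` is comparable to `N y + 1`, so it suffices to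
prove the estimate for that weight. For every `y`, either `N y ≤ N (x - y)` or the reverse, and
`y ↦ x - y` exchanges the two cases together with `k` and `l`. If `N y ≤ N (x - y)`, then
`N x ≤ 2 N (x - y)`. On `N y ≤ N x` the first factor is then `≲ ⟨x⟩^{-k}`, and the sum of
`⟨y⟩^{-l}` over that cube is `≲ ⟨x⟩^{d-l}` because `l < d`. On `N y > N x` the summand is
`≤ ⟨y⟩^{-k-l}`, whose tail sum is `≲ ⟨x⟩^{d-k-l}` because `k + l > d`. The sphere of sup-radius
`n` has `O((n+1)^{d-1})` points, so both lattice sums reduce to sums of `(n+1)^{d-1-s}` over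
`n`, which are bounded by comparison with `∫ t^{d-1-s} dt`.
-/

open Finset

lemma sum_Ico_add_one_rpow_le {c : ℝ} (hc : c ≤ 0) (hc₁ : c ≠ -1) {a b : ℕ} (ha : 0 < a)
    (hab : a ≤ b) :
    ∑ n ∈ Ico a b, ((n : ℝ) + 1) ^ c ≤ ((b : ℝ) ^ (c + 1) - (a : ℝ) ^ (c + 1)) / (c + 1) := by
  have ha' : (0 : ℝ) < a := by exact_mod_cast ha
  have hanti : AntitoneOn (fun x : ℝ => x ^ c) (Set.Icc a b) := fun x hx y _ hxy =>
    Real.rpow_le_rpow_of_nonpos (ha'.trans_le hx.1) hxy hc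
  have hzero : (0 : ℝ) ∉ Set.uIcc (a : ℝ) b := by
    rw [Set.uIcc_of_le (by exact_mod_cast hab)]
    exact fun h => ha'.not_ge h.1
  simpa [integral_rpow (Or.inr ⟨hc₁, hzero⟩)] using hanti.sum_le_integral_Ico hab

lemma sum_range_add_one_rpow_le {c : ℝ} (hc : -1 < c) (R : ℕ) :
    ∑ n ∈ range (R + 1), ((n : ℝ) + 1) ^ c ≤ (1 + (c + 1)⁻¹) * ((R : ℝ) + 1) ^ (c + 1) := by
  have hc₁ : 0 < c + 1 := by linarith
  have hpow : 1 ≤ ((R : ℝ) + 1) ^ (c + 1) := Real.one_le_rpow (by simp) hc₁.le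
  rcases le_or_gt 0 c with hc₀ | hc₀
  · calc ∑ n ∈ range (R + 1), ((n : ℝ) + 1) ^ c
        ≤ ∑ _n ∈ range (R + 1), ((R : ℝ) + 1) ^ c := by
          gcongr with n hn
          exact_mod_cast Nat.lt_succ_iff.mp (mem_range.mp hn)
      _ = ((R : ℝ) + 1) ^ (c + 1) := by
          rw [sum_const, card_range, nsmul_eq_mul, Real.rpow_add_one (by positivity)]
          push_cast
          ring
      _ ≤ (1 + (c + 1)⁻¹) * ((R : ℝ) + 1) ^ (c + 1) :=
          le_mul_of_one_le_left (by positivity) (by simp; positivity)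
  · have htail := sum_Ico_add_one_rpow_le hc₀.le (by linarith) one_pos (Nat.le_add_left 1 R)
    rw [range_eq_Ico, sum_eq_sum_Ico_succ_bot R.succ_pos]
    calc ((0 : ℕ) + 1 : ℝ) ^ c + ∑ n ∈ Ico 1 (R + 1), ((n : ℝ) + 1) ^ c
        ≤ 1 + (((R : ℝ) + 1) ^ (c + 1) - 1) / (c + 1) := by
          simpa using htail
      _ ≤ (1 + (c + 1)⁻¹) * ((R : ℝ) + 1) ^ (c + 1) := by
          have : 0 < (c + 1)⁻¹ := inv_pos.mpr hc₁
          rw [div_eq_mul_inv]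
          linarith

lemma sum_Ico_add_one_rpow_le_of_lt_neg_one {c : ℝ} (hc : c < -1) {a : ℕ} (ha : 0 < a)
    (b : ℕ) :
    ∑ n ∈ Ico a b, ((n : ℝ) + 1) ^ c ≤ (-(c + 1))⁻¹ * (a : ℝ) ^ (c + 1) := by
  have hc₁ : 0 < -(c + 1) := by linarith
  rcases le_or_gt a b with hab | hba
  · calc ∑ n ∈ Ico a b, ((n : ℝ) + 1) ^ c
        ≤ ((b : ℝ) ^ (c + 1) - (a : ℝ) ^ (c + 1)) / (c + 1) :=
          sum_Ico_add_one_rpow_le (by linarith) hc.ne ha hab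
      _ = (-(c + 1))⁻¹ * ((a : ℝ) ^ (c + 1) - (b : ℝ) ^ (c + 1)) := by
          rw [div_eq_mul_inv, inv_neg]
          ring
      _ ≤ (-(c + 1))⁻¹ * (a : ℝ) ^ (c + 1) := by
          gcongr
          exact sub_le_self _ (by positivity)
  · rw [Ico_eq_empty_of_le hba.le, sum_empty]
    positivity

lemma rpow_le_rpow_mul_of_le_mul {a b c e : ℝ} (ha : 0 < a) (hc : 0 < c) (hab : a ≤ c * b)
    (he : e ≤ 0) : b ^ e ≤ c ^ (-e) * a ^ e := by
  have hb : 0 < b := pos_of_mul_pos_right (ha.trans_le hab) hc.le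
  calc b ^ e = c ^ (-e) * (c * b) ^ e := by
        rw [Real.mul_rpow hc.le hb.le, ← mul_assoc, ← Real.rpow_add hc, neg_add_cancel,
          Real.rpow_zero, one_mul]
    _ ≤ c ^ (-e) * a ^ e :=
        mul_le_mul_of_nonneg_left (Real.rpow_le_rpow_of_nonpos ha hab he) (by positivity)

namespace IntLattice

variable {d : ℕ}

def supNorm (y : Fin d → ℤ) : ℕ := univ.sup fun j => (y j).natAbs

lemma natAbs_le_supNorm (y : Fin d → ℤ) (j : Fin d) : (y j).natAbs ≤ supNorm y :=
  le_sup (f := fun j => (y j).natAbs) (mem_univ j)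

lemma supNorm_le_iff {y : Fin d → ℤ} {n : ℕ} : supNorm y ≤ n ↔ ∀ j, (y j).natAbs ≤ n := by
  simp [supNorm]

lemma supNorm_add_le (y z : Fin d → ℤ) : supNorm (y + z) ≤ supNorm y + supNorm z :=
  supNorm_le_iff.mpr fun j =>
    (Int.natAbs_add_le _ _).trans (add_le_add (natAbs_le_supNorm y j) (natAbs_le_supNorm z j))

noncomputable def cube (d n : ℕ) : Finset (Fin d → ℤ) :=
  Fintype.piFinset fun _ => Icc (-n : ℤ) n

lemma mem_cube {n : ℕ} {y : Fin d → ℤ} : y ∈ cube d n ↔ supNorm y ≤ n := by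
  simp only [cube, Fintype.mem_piFinset, mem_Icc, supNorm_le_iff]
  exact forall_congr' fun j => by omega

lemma card_cube (d n : ℕ) : #(cube d n) = (2 * n + 1) ^ d := by
  simp only [cube, Fintype.card_piFinset, Int.card_Icc, prod_const, card_univ, Fintype.card_fin]
  congr 1
  omega

lemma card_filter_supNorm_eq_le (hd : 1 ≤ d) (n : ℕ) :
    #{y ∈ cube d n | supNorm y = n} ≤ d * 2 ^ d * (n + 1) ^ (d - 1) := by
  rcases n with _ | m
  · calc #{y ∈ cube d 0 | supNorm y = 0} ≤ #(cube d 0) := card_filter_le _ _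
      _ = 1 := by simp [card_cube]
      _ ≤ d * 2 ^ d * (0 + 1) ^ (d - 1) := by
          simp only [zero_add, one_pow, mul_one]
          exact Nat.one_le_iff_ne_zero.mpr (by positivity)
  have hsphere : {y ∈ cube d (m + 1) | supNorm y = m + 1} = cube d (m + 1) \ cube d m := by
    ext y
    simp only [mem_filter, mem_sdiff, mem_cube]
    omega
  have hdiff : (2 * m + 3 : ℤ) ^ d - (2 * m + 1) ^ d ≤ 2 * d * (2 * m + 3) ^ (d - 1) := by
    have h := abs_pow_sub_pow_le (2 * m + 3 : ℤ) (2 * m + 1) d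
    have h₃ : |(2 * m + 3 : ℤ)| = 2 * m + 3 := abs_of_nonneg (by positivity)
    have h₁ : |(2 * m + 1 : ℤ)| = 2 * m + 1 := abs_of_nonneg (by positivity)
    rw [h₃, h₁, max_eq_left (by omega), show (2 * m + 3 - (2 * m + 1) : ℤ) = 2 by ring,
      abs_two] at h
    exact (le_abs_self _).trans h
  rw [hsphere, card_sdiff_of_subset fun y hy => mem_cube.mpr ((mem_cube.mp hy).trans m.le_succ),
    card_cube, card_cube]
  zify [Nat.pow_le_pow_left (show 2 * m + 1 ≤ 2 * (m + 1) + 1 by omega) d]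
  calc ((2 * (m + 1) + 1 : ℕ) : ℤ) ^ d - ((2 * m + 1 : ℕ) : ℤ) ^ d
      ≤ 2 * d * (2 * m + 3) ^ (d - 1) := by
        push_cast
        ring_nf at hdiff ⊢
        exact hdiff
    _ ≤ 2 * d * (2 * (m + 1 + 1)) ^ (d - 1) := by gcongr; omega
    _ = d * 2 ^ d * (m + 1 + 1) ^ (d - 1) := by
        rw [mul_pow, ← Nat.sub_add_cancel hd, pow_succ, Nat.add_sub_cancel]
        ring

lemma sum_comp_supNorm_le (hd : 1 ≤ d) (u : Finset (Fin d → ℤ)) {g : ℕ → ℝ}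
    (hg : ∀ n, 0 ≤ g n) :
    ∑ y ∈ u, g (supNorm y) ≤
      d * 2 ^ d * ∑ n ∈ u.image supNorm, ((n : ℝ) + 1) ^ ((d : ℝ) - 1) * g n := by
  rw [sum_comp, mul_sum]
  gcongr with n
  have hfiber : #{y ∈ u | supNorm y = n} ≤ d * 2 ^ d * (n + 1) ^ (d - 1) :=
    (card_le_card fun y hy => by
      rw [mem_filter] at hy ⊢
      exact ⟨mem_cube.mpr hy.2.le, hy.2⟩).trans (card_filter_supNorm_eq_le hd n)
  have hexp : ((n : ℝ) + 1) ^ ((d : ℝ) - 1) = ((n : ℝ) + 1) ^ (d - 1) := by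
    rw [← Real.rpow_natCast, Nat.cast_sub hd, Nat.cast_one]
  rw [nsmul_eq_mul, hexp, ← mul_assoc]
  gcongr
  · exact hg n
  · exact_mod_cast hfiber

lemma sum_comp_supNorm_rpow_le (hd : 1 ≤ d) (u : Finset (Fin d → ℤ)) (s : ℝ) :
    ∑ y ∈ u, ((supNorm y : ℝ) + 1) ^ (-s) ≤
      d * 2 ^ d * ∑ n ∈ u.image supNorm, ((n : ℝ) + 1) ^ ((d : ℝ) - 1 - s) := by
  refine (sum_comp_supNorm_le hd u (g := fun n => ((n : ℝ) + 1) ^ (-s))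
    fun n => by positivity).trans_eq ?_
  congr 1
  refine sum_congr rfl fun n _ => ?_
  rw [← Real.rpow_add (by positivity), sub_eq_add_neg _ s]

lemma sum_filter_supNorm_le_rpow_le (hd : 1 ≤ d) {s : ℝ} (hs : s < d) (R : ℕ)
    (u : Finset (Fin d → ℤ)) :
    ∑ y ∈ u with supNorm y ≤ R, ((supNorm y : ℝ) + 1) ^ (-s) ≤
      d * 2 ^ d * (1 + ((d : ℝ) - s)⁻¹) * ((R : ℝ) + 1) ^ ((d : ℝ) - s) := by
  have himage : {y ∈ u | supNorm y ≤ R}.image supNorm ⊆ range (R + 1) := by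
    intro n hn
    obtain ⟨y, hy, rfl⟩ := mem_image.mp hn
    exact mem_range.mpr (Nat.lt_succ_of_le (mem_filter.mp hy).2)
  calc ∑ y ∈ u with supNorm y ≤ R, ((supNorm y : ℝ) + 1) ^ (-s)
      ≤ d * 2 ^ d * ∑ n ∈ range (R + 1), ((n : ℝ) + 1) ^ ((d : ℝ) - 1 - s) :=
        (sum_comp_supNorm_rpow_le hd _ s).trans <| mul_le_mul_of_nonneg_left
          (sum_le_sum_of_subset_of_nonneg himage fun _ _ _ => by positivity) (by positivity)
    _ ≤ d * 2 ^ d *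
          ((1 + ((d : ℝ) - 1 - s + 1)⁻¹) * ((R : ℝ) + 1) ^ ((d : ℝ) - 1 - s + 1)) := by
        gcongr
        exact sum_range_add_one_rpow_le (by linarith) R
    _ = d * 2 ^ d * (1 + ((d : ℝ) - s)⁻¹) * ((R : ℝ) + 1) ^ ((d : ℝ) - s) := by
        ring_nf

lemma sum_filter_lt_supNorm_rpow_le (hd : 1 ≤ d) {s : ℝ} (hs : d < s) (R : ℕ)
    (u : Finset (Fin d → ℤ)) :
    ∑ y ∈ u with R < supNorm y, ((supNorm y : ℝ) + 1) ^ (-s) ≤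
      d * 2 ^ d * (s - d)⁻¹ * ((R : ℝ) + 1) ^ ((d : ℝ) - s) := by
  set M := u.sup supNorm
  have himage : {y ∈ u | R < supNorm y}.image supNorm ⊆ Ico (R + 1) (M + 1) := by
    intro n hn
    obtain ⟨y, hy, rfl⟩ := mem_image.mp hn
    rw [mem_filter] at hy
    exact mem_Ico.mpr ⟨hy.2, Nat.lt_succ_of_le (le_sup hy.1)⟩
  calc ∑ y ∈ u with R < supNorm y, ((supNorm y : ℝ) + 1) ^ (-s)
      ≤ d * 2 ^ d * ∑ n ∈ Ico (R + 1) (M + 1), ((n : ℝ) + 1) ^ ((d : ℝ) - 1 - s) :=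
        (sum_comp_supNorm_rpow_le hd _ s).trans <| mul_le_mul_of_nonneg_left
          (sum_le_sum_of_subset_of_nonneg himage fun _ _ _ => by positivity) (by positivity)
    _ ≤ d * 2 ^ d *
          ((-((d : ℝ) - 1 - s + 1))⁻¹ * ((R + 1 : ℕ) : ℝ) ^ ((d : ℝ) - 1 - s + 1)) := by
        gcongr
        exact sum_Ico_add_one_rpow_le_of_lt_neg_one (by linarith) R.succ_pos _
    _ = d * 2 ^ d * (s - d)⁻¹ * ((R : ℝ) + 1) ^ ((d : ℝ) - s) := by
        push_cast
        ring_nf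

lemma supNorm_add_one_le_two_mul_of_supNorm_le {x y : Fin d → ℤ}
    (hy : supNorm y ≤ supNorm (x - y)) :
    (supNorm x : ℝ) + 1 ≤ 2 * ((supNorm (x - y) : ℝ) + 1) := by
  have h := supNorm_add_le (x - y) y
  rw [sub_add_cancel] at h
  have : (supNorm x : ℝ) ≤ supNorm (x - y) + supNorm y := by exact_mod_cast h
  have : (supNorm y : ℝ) ≤ supNorm (x - y) := by exact_mod_cast hy
  linarith

lemma exists_sum_filter_supNorm_le_supNorm_sub_le (hd : 1 ≤ d) {k l : ℝ} (hk : 0 ≤ k)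
    (hl : l < d) (hkl : d < k + l) :
    ∃ C > 0, ∀ (x : Fin d → ℤ) (u : Finset (Fin d → ℤ)),
      ∑ y ∈ u with supNorm y ≤ supNorm (x - y),
          ((supNorm (x - y) : ℝ) + 1) ^ (-k) * ((supNorm y : ℝ) + 1) ^ (-l) ≤
        C * ((supNorm x : ℝ) + 1) ^ ((d : ℝ) - k - l) := by
  set A : ℝ := d * 2 ^ d * (1 + ((d : ℝ) - l)⁻¹)
  set B : ℝ := d * 2 ^ d * (k + l - d)⁻¹
  have hA : 0 < A := by
    have : 0 < (d : ℝ) - l := by linarith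
    positivity
  have hB : 0 < B := by
    have : 0 < k + l - d := by linarith
    positivity
  refine ⟨2 ^ k * A + B, by positivity, fun x u => ?_⟩
  set R := supNorm x
  set v := {y ∈ u | supNorm y ≤ supNorm (x - y)}
  have hnear : ∀ y ∈ v,
      ((supNorm (x - y) : ℝ) + 1) ^ (-k) ≤ 2 ^ k * ((R : ℝ) + 1) ^ (-k) := fun y hy => by
    simpa using rpow_le_rpow_mul_of_le_mul (by positivity) two_pos
      (supNorm_add_one_le_two_mul_of_supNorm_le (mem_filter.mp hy).2) (neg_nonpos.mpr hk)
  have hfar : ∀ y ∈ v, ((supNorm (x - y) : ℝ) + 1) ^ (-k) * ((supNorm y : ℝ) + 1) ^ (-l) ≤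
      ((supNorm y : ℝ) + 1) ^ (-(k + l)) := fun y hy => by
    have h : (supNorm y : ℝ) ≤ supNorm (x - y) := by exact_mod_cast (mem_filter.mp hy).2
    rw [neg_add, Real.rpow_add (by positivity)]
    exact mul_le_mul_of_nonneg_right
      (Real.rpow_le_rpow_of_nonpos (by positivity) (by linarith) (neg_nonpos.mpr hk))
      (by positivity)
  have hexp : ((R : ℝ) + 1) ^ (-k) * ((R : ℝ) + 1) ^ ((d : ℝ) - l) =
      ((R : ℝ) + 1) ^ ((d : ℝ) - (k + l)) := by
    rw [← Real.rpow_add (by positivity)]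
    ring_nf
  rw [← sum_filter_add_sum_filter_not v (fun y => supNorm y ≤ R)]
  simp only [not_le]
  calc ∑ y ∈ v with supNorm y ≤ R,
          ((supNorm (x - y) : ℝ) + 1) ^ (-k) * ((supNorm y : ℝ) + 1) ^ (-l) +
        ∑ y ∈ v with R < supNorm y,
          ((supNorm (x - y) : ℝ) + 1) ^ (-k) * ((supNorm y : ℝ) + 1) ^ (-l)
      ≤ 2 ^ k * ((R : ℝ) + 1) ^ (-k) *
          ∑ y ∈ v with supNorm y ≤ R, ((supNorm y : ℝ) + 1) ^ (-l) +
        ∑ y ∈ v with R < supNorm y, ((supNorm y : ℝ) + 1) ^ (-(k + l)) := by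
        rw [mul_sum]
        gcongr with y hy y hy
        · exact hnear y (mem_filter.mp hy).1
        · exact hfar y (mem_filter.mp hy).1
    _ ≤ 2 ^ k * ((R : ℝ) + 1) ^ (-k) * (A * ((R : ℝ) + 1) ^ ((d : ℝ) - l)) +
        B * ((R : ℝ) + 1) ^ ((d : ℝ) - (k + l)) := by
        gcongr
        · exact sum_filter_supNorm_le_rpow_le hd hl R v
        · exact sum_filter_lt_supNorm_rpow_le hd hkl R v
    _ = (2 ^ k * A + B) * ((R : ℝ) + 1) ^ ((d : ℝ) - k - l) := by
        rw [mul_mul_mul_comm, hexp, sub_add_eq_sub_sub]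
        ring

lemma exists_sum_supNorm_conv_le (hd : 1 ≤ d) {k l : ℝ} (hk : 0 ≤ k) (hl : 0 ≤ l)
    (hkd : k < d) (hld : l < d) (hkl : d < k + l) :
    ∃ C > 0, ∀ (x : Fin d → ℤ) (u : Finset (Fin d → ℤ)),
      ∑ y ∈ u, ((supNorm (x - y) : ℝ) + 1) ^ (-k) * ((supNorm y : ℝ) + 1) ^ (-l) ≤
        C * ((supNorm x : ℝ) + 1) ^ ((d : ℝ) - k - l) := by
  obtain ⟨C₁, hC₁, h₁⟩ := exists_sum_filter_supNorm_le_supNorm_sub_le hd hk hld hkl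
  obtain ⟨C₂, hC₂, h₂⟩ :=
    exists_sum_filter_supNorm_le_supNorm_sub_le hd hl hkd (by linarith)
  refine ⟨C₁ + C₂, by positivity, fun x u => ?_⟩
  have hswap : ∑ y ∈ u with ¬supNorm y ≤ supNorm (x - y),
        ((supNorm (x - y) : ℝ) + 1) ^ (-k) * ((supNorm y : ℝ) + 1) ^ (-l) ≤
      ∑ z ∈ u.image (x - ·) with supNorm z ≤ supNorm (x - z),
        ((supNorm (x - z) : ℝ) + 1) ^ (-l) * ((supNorm z : ℝ) + 1) ^ (-k) := by
    rw [filter_image, sum_image fun a _ b _ h => sub_right_injective h]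
    simp only [sub_sub_cancel, mul_comm (((supNorm _ : ℝ) + 1) ^ (-l))]
    exact sum_le_sum_of_subset_of_nonneg
      (monotone_filter_right u fun _ _ => le_of_not_ge) fun y _ _ => by positivity
  rw [← sum_filter_add_sum_filter_not u (fun y => supNorm y ≤ supNorm (x - y))]
  calc _ ≤ C₁ * ((supNorm x : ℝ) + 1) ^ ((d : ℝ) - k - l) +
        C₂ * ((supNorm x : ℝ) + 1) ^ ((d : ℝ) - l - k) :=
        add_le_add (h₁ x u) (hswap.trans (h₂ x _))
    _ = (C₁ + C₂) * ((supNorm x : ℝ) + 1) ^ ((d : ℝ) - k - l) := by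
        rw [sub_right_comm (d : ℝ) l k]
        ring

lemma jap_eq_sqrt (y : Fin d → ℤ) : jap y = √(1 + ∑ j, (y j : ℝ) ^ 2) := by
  rw [jap, Real.sqrt_eq_rpow]

lemma jap_pos (y : Fin d → ℤ) : 0 < jap y := by
  rw [jap_eq_sqrt]
  positivity

lemma supNorm_add_one_le_two_mul_jap (y : Fin d → ℤ) : (supNorm y : ℝ) + 1 ≤ 2 * jap y := by
  have hsq : (supNorm y : ℝ) ^ 2 ≤ ∑ j, (y j : ℝ) ^ 2 := by
    rcases (univ : Finset (Fin d)).eq_empty_or_nonempty with h | h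
    · simp [supNorm, h]
    obtain ⟨j, -, hj⟩ := exists_mem_eq_sup univ h fun j => (y j).natAbs
    rw [show supNorm y = (y j).natAbs from hj, Nat.cast_natAbs, Int.cast_abs, sq_abs]
    exact single_le_sum (f := fun j => (y j : ℝ) ^ 2) (fun j _ => sq_nonneg _) (mem_univ j)
  rw [jap_eq_sqrt, ← abs_of_nonneg (by positivity : (0 : ℝ) ≤ supNorm y + 1),
    ← Real.sqrt_sq_eq_abs, show (2 : ℝ) = √4 by rw [show (4 : ℝ) = 2 ^ 2 by norm_num,
      Real.sqrt_sq zero_le_two], ← Real.sqrt_mul zero_le_four]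
  exact Real.sqrt_le_sqrt (by nlinarith [sq_nonneg ((supNorm y : ℝ) - 1)])

lemma jap_le_sqrt_mul_supNorm_add_one (y : Fin d → ℤ) :
    jap y ≤ √(d + 1) * ((supNorm y : ℝ) + 1) := by
  have hcoord (j : Fin d) : (y j : ℝ) ^ 2 ≤ ((supNorm y : ℝ) + 1) ^ 2 := by
    have : ((y j).natAbs : ℝ) ≤ supNorm y := by exact_mod_cast natAbs_le_supNorm y j
    rw [Nat.cast_natAbs, Int.cast_abs] at this
    rw [← sq_abs]
    gcongr
    linarith
  have hsum : ∑ j, (y j : ℝ) ^ 2 ≤ d * ((supNorm y : ℝ) + 1) ^ 2 :=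
    (sum_le_sum fun j _ => hcoord j).trans_eq (by simp)
  have hone : (1 : ℝ) ≤ ((supNorm y : ℝ) + 1) ^ 2 := one_le_pow₀ (by simp)
  rw [jap_eq_sqrt, ← Real.sqrt_sq (by positivity : (0 : ℝ) ≤ supNorm y + 1),
    ← Real.sqrt_mul (by positivity)]
  exact Real.sqrt_le_sqrt (by linarith)

lemma exists_sum_jap_conv_le (hd : 1 ≤ d) {k l : ℝ} (hkd : k < d) (hld : l < d)
    (hkl : d < k + l) :
    ∃ C > 0, ∀ (x : Fin d → ℤ) (u : Finset (Fin d → ℤ)),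
      ∑ y ∈ u, jap (x - y) ^ (-k) * jap y ^ (-l) ≤ C * jap x ^ ((d : ℝ) - k - l) := by
  have hk : 0 ≤ k := by linarith
  have hl : 0 ≤ l := by linarith
  have hjap (s : ℝ) (hs : 0 ≤ s) (y : Fin d → ℤ) :
      jap y ^ (-s) ≤ 2 ^ s * ((supNorm y : ℝ) + 1) ^ (-s) := by
    simpa using rpow_le_rpow_mul_of_le_mul (by positivity) two_pos
      (supNorm_add_one_le_two_mul_jap y) (neg_nonpos.mpr hs)
  obtain ⟨C, hC, hconv⟩ := exists_sum_supNorm_conv_le hd hk hl hkd hld hkl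
  refine ⟨2 ^ k * 2 ^ l * C * √(d + 1) ^ (-((d : ℝ) - k - l)), by positivity, fun x u => ?_⟩
  calc ∑ y ∈ u, jap (x - y) ^ (-k) * jap y ^ (-l)
      ≤ ∑ y ∈ u, 2 ^ k * ((supNorm (x - y) : ℝ) + 1) ^ (-k) *
          (2 ^ l * ((supNorm y : ℝ) + 1) ^ (-l)) := by
        gcongr with y
        · exact (Real.rpow_pos_of_pos (jap_pos _) _).le
        · exact hjap k hk _
        · exact hjap l hl y
    _ = 2 ^ k * 2 ^ l *
          ∑ y ∈ u, ((supNorm (x - y) : ℝ) + 1) ^ (-k) * ((supNorm y : ℝ) + 1) ^ (-l) := by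
        rw [mul_sum]
        exact sum_congr rfl fun y _ => by ring
    _ ≤ 2 ^ k * 2 ^ l * (C * ((supNorm x : ℝ) + 1) ^ ((d : ℝ) - k - l)) := by
        gcongr
        exact hconv x u
    _ ≤ 2 ^ k * 2 ^ l *
          (C * (√(d + 1) ^ (-((d : ℝ) - k - l)) * jap x ^ ((d : ℝ) - k - l))) := by
        gcongr
        exact rpow_le_rpow_mul_of_le_mul (jap_pos x) (by positivity)
          (jap_le_sqrt_mul_supNorm_add_one x) (by linarith)
    _ = 2 ^ k * 2 ^ l * C * √(d + 1) ^ (-((d : ℝ) - k - l)) * jap x ^ ((d : ℝ) - k - l) := by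
        ring

end IntLattice

open IntLattice in
theorem statement5 (d : ℕ) (hd : 1 ≤ d) (k l : ℝ)
    (hk : k < d) (hl : l < d) (hkl : (d : ℝ) < k + l) :
    ∃ C > 0, ∀ x : Fin d → ℤ,
      (Summable fun y => jap (x - y) ^ (-k) * jap y ^ (-l)) ∧
      ∑' y, jap (x - y) ^ (-k) * jap y ^ (-l) ≤ C * jap x ^ ((d : ℝ) - k - l) := by
  obtain ⟨C, hC, hpartial⟩ := exists_sum_jap_conv_le hd hk hl hkl
  refine ⟨C, hC, fun x => ?_⟩
  have hnonneg (y : Fin d → ℤ) : 0 ≤ jap (x - y) ^ (-k) * jap y ^ (-l) :=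
    mul_nonneg (Real.rpow_pos_of_pos (jap_pos _) _).le (Real.rpow_pos_of_pos (jap_pos _) _).le
  have hsummable := summable_of_sum_le hnonneg (hpartial x)
  exact ⟨hsummable, hsummable.tsum_le_of_sum_le (hpartial x)⟩
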